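/- arXiv:2304.03183 — 4 statements merged into one kernel-verified Lean document; each statement's English description precedes it below -/
import Mathlib

section
/- If a complete fair LTS S with initial state q is history-deterministic, then for every complete fair LTS S' with initial state q', language inclusion L(q') ⊆ L(q) holds if and only if q' is fairly simulated by q. -/
/-- A fair labelled transition system: edges `E ⊆ V × A × V` together with an
acceptance condition `Acc` on infinite sequences of edges. -/
structure FairLTS (V A : Type) where
  E : Set (V × A × V)
  Acc : Set (ℕ → V × A × V)

namespace FairLTS

variable {V V' A : Type}

/-- `ρ` is a run on the word `w` from state `s₀`. -/
def IsRun (S : FairLTS V A) (s₀ : V) (w : ℕ → A) (ρ : ℕ → V × A × V) : Prop :=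
  (ρ 0).1 = s₀ ∧ ∀ n, ρ n ∈ S.E ∧ (ρ n).2.1 = w n ∧ (ρ (n + 1)).1 = (ρ n).2.2

/-- The language of infinite words admitting an accepting run from `s₀`. -/
def Lang (S : FairLTS V A) (s₀ : V) : Set (ℕ → A) :=
  {w | ∃ ρ, S.IsRun s₀ w ρ ∧ ρ ∈ S.Acc}

/-- Every state has at least one outgoing `a`-transition for every letter `a`. -/
def Complete (S : FairLTS V A) : Prop :=
  ∀ s a, ∃ s', (s, a, s') ∈ S.E

/-- The finite run (as a list of edges) built by iterating a candidate resolver `r`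
on the word `w`. -/
def histOf (r : List (V × A × V) → A → V × A × V) (w : ℕ → A) : ℕ → List (V × A × V)
  | 0 => []
  | n + 1 => histOf r w n ++ [r (histOf r w n) (w n)]

/-- The infinite run built by iterating `r` on the word `w`. -/
def runOf (r : List (V × A × V) → A → V × A × V) (w : ℕ → A) (n : ℕ) : V × A × V :=
  r (histOf r w n) (w n)

/-- `r` is a resolver from `s₀`: for every word of the language, the run it builds
is an accepting run on that word. -/
def IsResolver (S : FairLTS V A) (s₀ : V) (r : List (V × A × V) → A → V × A × V) : Prop :=
  ∀ w ∈ S.Lang s₀, S.IsRun s₀ w (runOf r w) ∧ runOf r w ∈ S.Acc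

/-- History-determinism: existence of a resolver. -/
def HistoryDeterministic (S : FairLTS V A) (s₀ : V) : Prop :=
  ∃ r, S.IsResolver s₀ r

end FairLTS

namespace FairLTS

variable {V V' A : Type}

/-- History of the fair simulation game: Player 1 plays the edges of `ρ₁` one by one,
and Player 2 answers with `σ` applied to the paired history and Player 1's new edge. -/
def simHist (σ : List ((V × A × V) × (V' × A × V')) → (V × A × V) → V' × A × V')
    (ρ₁ : ℕ → V × A × V) : ℕ → List ((V × A × V) × (V' × A × V'))
  | 0 => []
  | n + 1 => simHist σ ρ₁ n ++ [(ρ₁ n, σ (simHist σ ρ₁ n) (ρ₁ n))]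

/-- The run built by Player 2's strategy `σ` in response to Player 1's run `ρ₁`. -/
def simRun (σ : List ((V × A × V) × (V' × A × V')) → (V × A × V) → V' × A × V')
    (ρ₁ : ℕ → V × A × V) (n : ℕ) : V' × A × V' :=
  σ (simHist σ ρ₁ n) (ρ₁ n)

/-- Fair simulation: `s` is fairly simulated by `s'` iff Player 2 has a strategy in the
simulation game which answers every run of `S` from `s` by an equally-labelled run of `S'`
from `s'`, and which produces an accepting run whenever Player 1's run is accepting. -/
def FairSim (S : FairLTS V A) (S' : FairLTS V' A) (s : V) (s' : V') : Prop :=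
  ∃ σ, ∀ (w : ℕ → A) (ρ₁ : ℕ → V × A × V), S.IsRun s w ρ₁ →
    S'.IsRun s' w (simRun σ ρ₁) ∧ (ρ₁ ∈ S.Acc → simRun σ ρ₁ ∈ S'.Acc)

end FairLTS

/-- if a complete fair LTS `S` is history-deterministic from `q`, then for
every complete fair LTS `S'` with initial state `q'`, language inclusion `L(q') ⊆ L(q)`
holds iff `q'` is fairly simulated by `q`. -/
theorem stmt2 {V A : Type} (S : FairLTS V A) (q : V)
    (hS : S.Complete) (hHD : S.HistoryDeterministic q)
    {V' : Type} (S' : FairLTS V' A) (q' : V') (hS' : S'.Complete) :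
    S'.Lang q' ⊆ S.Lang q ↔ S'.FairSim S q' q := by
  classical
  obtain ⟨r, hr⟩ := hHD
  constructor
  · intro hL
    -- current state after a finite history of edges of S
    let cur : List (V × A × V) → V := fun l => (l.getLast?).elim q (fun p => p.2.2)
    have hcurcat : ∀ (l : List (V × A × V)) (p : V × A × V), cur (l ++ [p]) = p.2.2 := by
      intro l p
      simp [cur, List.getLast?_concat]
    let σ : List ((V' × A × V') × (V × A × V)) → (V' × A × V') → V × A × V :=
      fun h e =>
        let hs := h.map Prod.snd
        let a := e.2.1
        let c := r hs a
        if c ∈ S.E ∧ c.2.1 = a ∧ c.1 = cur hs then c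
        else (cur hs, a, Classical.choose (hS (cur hs) a))
    refine ⟨σ, ?_⟩
    intro w ρ₁ hρ₁
    have hsucc : ∀ n, (FairLTS.simHist σ ρ₁ (n + 1)).map Prod.snd =
        (FairLTS.simHist σ ρ₁ n).map Prod.snd ++ [FairLTS.simRun σ ρ₁ n] := by
      intro n
      simp [FairLTS.simHist, FairLTS.simRun]
    have hcur0 : cur ((FairLTS.simHist σ ρ₁ 0).map Prod.snd) = q := by
      simp [FairLTS.simHist, cur]
    have hcurS : ∀ n, cur ((FairLTS.simHist σ ρ₁ (n + 1)).map Prod.snd) =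
        (FairLTS.simRun σ ρ₁ n).2.2 := by
      intro n
      rw [hsucc n, hcurcat]
    have hstep : ∀ n, FairLTS.simRun σ ρ₁ n ∈ S.E ∧
        (FairLTS.simRun σ ρ₁ n).2.1 = (ρ₁ n).2.1 ∧
        (FairLTS.simRun σ ρ₁ n).1 = cur ((FairLTS.simHist σ ρ₁ n).map Prod.snd) := by
      intro n
      have hdef : FairLTS.simRun σ ρ₁ n = σ (FairLTS.simHist σ ρ₁ n) (ρ₁ n) := rfl
      rw [hdef]
      simp only [σ]
      split
      · next h => exact ⟨h.1, h.2.1, h.2.2⟩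
      · exact ⟨Classical.choose_spec (hS _ _), rfl, rfl⟩
    have hrun : S.IsRun q w (FairLTS.simRun σ ρ₁) := by
      refine ⟨by rw [(hstep 0).2.2, hcur0], fun n => ⟨(hstep n).1, ?_, ?_⟩⟩
      · rw [(hstep n).2.1, (hρ₁.2 n).2.1]
      · rw [(hstep (n + 1)).2.2, hcurS n]
    refine ⟨hrun, fun hacc => ?_⟩
    have hw : w ∈ S'.Lang q' := ⟨ρ₁, hρ₁, hacc⟩
    obtain ⟨hrrun, hracc⟩ := hr w (hL hw)
    -- current state along the resolver's run
    have hcurHist : ∀ n, cur (FairLTS.histOf r w n) = (FairLTS.runOf r w n).1 := by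
      intro n
      cases n with
      | zero => simp [FairLTS.histOf, cur, hrrun.1]
      | succ m =>
        have : FairLTS.histOf r w (m + 1) =
            FairLTS.histOf r w m ++ [FairLTS.runOf r w m] := rfl
        rw [this, hcurcat, (hrrun.2 m).2.2]
    have heq : ∀ n, (FairLTS.simHist σ ρ₁ n).map Prod.snd = FairLTS.histOf r w n →
        FairLTS.simRun σ ρ₁ n = FairLTS.runOf r w n := by
      intro n h
      show σ (FairLTS.simHist σ ρ₁ n) (ρ₁ n) = _
      simp only [σ, h, (hρ₁.2 n).2.1]
      rw [if_pos ⟨(hrrun.2 n).1, (hrrun.2 n).2.1, (hcurHist n).symm⟩]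
      rfl
    have hkey : ∀ n, (FairLTS.simHist σ ρ₁ n).map Prod.snd = FairLTS.histOf r w n := by
      intro n
      induction n with
      | zero => rfl
      | succ m ih =>
        rw [hsucc m, ih, heq m ih]
        rfl
    have hfin : FairLTS.simRun σ ρ₁ = FairLTS.runOf r w := funext fun n => heq n (hkey n)
    rw [hfin]
    exact hracc
  · rintro ⟨σ, hσ⟩ w ⟨ρ₁, hρ₁, hacc⟩
    exact ⟨FairLTS.simRun σ ρ₁, (hσ w ρ₁ hρ₁).1, (hσ w ρ₁ hρ₁).2 hacc⟩
end

section
/- Let S be a complete fair LTS with initial state q. If for every complete fair LTS S' with initial state q', the implication L(q') ⊆ L(q) ⟹ q' ⊑_fair q holds, then S is history-deterministic from q. -/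
/-!
Let `S'` be the one-state complete LTS with a self-loop for every letter, whose accepting runs are
exactly those labelled by words of `L(q)`; its language is `L(q)`, so it is fairly simulated by
`S` from `q`. Player 1 in that simulation game has no choices beyond the next letter, so Player 2's
strategy, read on the letters played so far, is a resolver for `S` from `q`.
-/

namespace FairLTS

variable {V A : Type}

def ofLang (L : Set (ℕ → A)) : FairLTS Unit A :=
  ⟨Set.univ, {ρ | (fun n => (ρ n).2.1) ∈ L}⟩

def letterRun (w : ℕ → A) : ℕ → Unit × A × Unit :=
  fun n => ((), w n, ())

theorem ofLang_complete (L : Set (ℕ → A)) : (ofLang L).Complete :=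
  fun _ _ => ⟨(), trivial⟩

theorem isRun_letterRun (L : Set (ℕ → A)) (w : ℕ → A) : (ofLang L).IsRun () w (letterRun w) :=
  ⟨rfl, fun _ => ⟨trivial, rfl, rfl⟩⟩

theorem lang_ofLang (L : Set (ℕ → A)) : (ofLang L).Lang () = L := by
  ext w
  constructor
  · rintro ⟨ρ, hρ, hacc⟩
    have hlabels : (fun n => (ρ n).2.1) = w := funext fun n => (hρ.2 n).2.1
    exact hlabels ▸ hacc
  · exact fun hw => ⟨letterRun w, isRun_letterRun L w, hw⟩

def withLetterLoop (e : V × A × V) : (Unit × A × Unit) × (V × A × V) :=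
  (((), e.2.1, ()), e)

def resolverOfStrategy
    (σ : List ((Unit × A × Unit) × (V × A × V)) → (Unit × A × Unit) → V × A × V) :
    List (V × A × V) → A → V × A × V :=
  fun hist a => σ (hist.map withLetterLoop) ((), a, ())

variable (σ : List ((Unit × A × Unit) × (V × A × V)) → (Unit × A × Unit) → V × A × V)
  {w : ℕ → A}

theorem map_histOf_resolverOfStrategy (hlabels : ∀ n, (simRun σ (letterRun w) n).2.1 = w n)
    (n : ℕ) :
    (histOf (resolverOfStrategy σ) w n).map withLetterLoop = simHist σ (letterRun w) n := by
  induction n with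
  | zero => rfl
  | succ n ih =>
    have hstep : resolverOfStrategy σ (histOf (resolverOfStrategy σ) w n) (w n)
        = simRun σ (letterRun w) n := by
      simp only [resolverOfStrategy, ih, simRun, letterRun]
    have hpair : withLetterLoop (simRun σ (letterRun w) n)
        = (letterRun w n, simRun σ (letterRun w) n) := by
      simp only [withLetterLoop, hlabels, letterRun]
    rw [histOf, List.map_append, ih, hstep, List.map_singleton, hpair]
    rfl

theorem runOf_resolverOfStrategy (hlabels : ∀ n, (simRun σ (letterRun w) n).2.1 = w n) :
    runOf (resolverOfStrategy σ) w = simRun σ (letterRun w) := by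
  funext n
  simp only [runOf, resolverOfStrategy, map_histOf_resolverOfStrategy σ hlabels, simRun, letterRun]

end FairLTS

theorem stmt3_general {V A : Type} (S : FairLTS V A) (q : V)
    (h : ∀ (V' : Type) (S' : FairLTS V' A) (q' : V'), S'.Complete →
      S'.Lang q' ⊆ S.Lang q → S'.FairSim S q' q) :
    S.HistoryDeterministic q := by
  obtain ⟨σ, hσ⟩ := h Unit (FairLTS.ofLang (S.Lang q)) () (FairLTS.ofLang_complete _)
    (FairLTS.lang_ofLang _).subset
  refine ⟨FairLTS.resolverOfStrategy σ, fun w hw => ?_⟩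
  obtain ⟨hrun, hacc⟩ := hσ w (FairLTS.letterRun w) (FairLTS.isRun_letterRun _ w)
  rw [FairLTS.runOf_resolverOfStrategy σ fun n => (hrun.2 n).2.1]
  exact ⟨hrun, hacc hw⟩

/-- if a complete fair LTS `S` with initial state `q` fairly simulates every
complete fair LTS whose language is included in `L(q)`, then `S` is
history-deterministic from `q`. -/
theorem stmt3 {V A : Type} (S : FairLTS V A) (q : V) (hS : S.Complete)
    (h : ∀ (V' : Type) (S' : FairLTS V' A) (q' : V'), S'.Complete →
      S'.Lang q' ⊆ S.Lang q → S'.FairSim S q' q) :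
    S.HistoryDeterministic q :=
  stmt3_general S q h
end

section
/- For a fair LTS S with a safety acceptance condition (or interpreted over finite words), Player 2 wins the one-token game G₁(S) if and only if S is history-deterministic. -/
namespace FairLTS

variable {V A : Type}

/-- History of a play of the one-token game: at each round the letter played by
Player 1, Player 2's edge, and Player 1's edge. Player 2's edge is chosen by her
strategy `σ` from the history and the current letter. -/
def g1Hist (σ : List (A × (V × A × V) × (V × A × V)) → A → V × A × V)
    (w : ℕ → A) (ρ₁ : ℕ → V × A × V) : ℕ → List (A × (V × A × V) × (V × A × V))
  | 0 => []
  | n + 1 => g1Hist σ w ρ₁ n ++ [(w n, σ (g1Hist σ w ρ₁ n) (w n), ρ₁ n)]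

/-- Player 2's run in the one-token game, built by her strategy `σ` against the word `w`
and Player 1's run `ρ₁`. -/
def g1Run (σ : List (A × (V × A × V) × (V × A × V)) → A → V × A × V)
    (w : ℕ → A) (ρ₁ : ℕ → V × A × V) (n : ℕ) : V × A × V :=
  σ (g1Hist σ w ρ₁ n) (w n)

/-- Player 2 wins the one-token game `G₁(S)` from `s₀`: she has a strategy such that for
every word and run chosen by Player 1, if Player 1's run is an accepting run on the word
then so is hers. -/
def P2WinsG1 (S : FairLTS V A) (s₀ : V) : Prop :=
  ∃ σ, ∀ (w : ℕ → A) (ρ₁ : ℕ → V × A × V),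
    ¬(S.IsRun s₀ w ρ₁ ∧ ρ₁ ∈ S.Acc) ∨
      (S.IsRun s₀ w (g1Run σ w ρ₁) ∧ g1Run σ w ρ₁ ∈ S.Acc)

end FairLTS

section AuxStmt14

variable {V A : Type}

/-- States along a run: `stOf s₀ ρ n` is the state reached after `n` edges. -/
def stOf (s₀ : V) (ρ : ℕ → V × A × V) : ℕ → V
  | 0 => s₀
  | n + 1 => (ρ n).2.2

/-- Easy direction: history-determinism implies Player 2 wins G₁. -/
lemma hd_to_g1 (S : FairLTS V A) (s₀ : V) (hd : S.HistoryDeterministic s₀) :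
    S.P2WinsG1 s₀ := by
  obtain ⟨r, hr⟩ := hd
  refine ⟨fun h a => r (h.map (fun x => x.2.1)) a, ?_⟩
  intro w ρ₁
  by_cases hP1 : S.IsRun s₀ w ρ₁ ∧ ρ₁ ∈ S.Acc
  · right
    have hw : w ∈ S.Lang s₀ := ⟨ρ₁, hP1.1, hP1.2⟩
    have hmap : ∀ n, (FairLTS.g1Hist (fun h a => r (h.map (fun x => x.2.1)) a) w ρ₁ n).map
        (fun x => x.2.1) = FairLTS.histOf r w n := by
      intro n
      induction n with
      | zero => rfl
      | succ n ih =>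
        rw [FairLTS.g1Hist, FairLTS.histOf, List.map_append, ih]
        rfl
    have heq : FairLTS.g1Run (fun h a => r (h.map (fun x => x.2.1)) a) w ρ₁ =
        FairLTS.runOf r w := by
      funext n
      show r ((FairLTS.g1Hist (fun h a => r (h.map (fun x => x.2.1)) a) w ρ₁ n).map
        (fun x => x.2.1)) (w n) = _
      rw [hmap n]
      rfl
    rw [heq]
    exact hr w hw
  · left; exact hP1

/-- Hard direction: a winning strategy in G₁ gives a resolver (safety condition). -/
lemma g1_to_hd (S : FairLTS V A) (s₀ : V) (safe : Set V)
    (hAcc : S.Acc = {ρ | ∀ n, (ρ n).1 ∈ safe ∧ (ρ n).2.2 ∈ safe})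
    (σ : List (A × (V × A × V) × (V × A × V)) → A → V × A × V)
    (hσ : ∀ (w : ℕ → A) (ρ₁ : ℕ → V × A × V),
      ¬(S.IsRun s₀ w ρ₁ ∧ ρ₁ ∈ S.Acc) ∨
        (S.IsRun s₀ w (FairLTS.g1Run σ w ρ₁) ∧ FairLTS.g1Run σ w ρ₁ ∈ S.Acc)) :
    S.HistoryDeterministic s₀ := by
  classical
  set f : V × A × V → A × (V × A × V) × (V × A × V) := fun e => (e.2.1, e, e) with hf
  set r : List (V × A × V) → A → V × A × V := fun h a => σ (h.map f) a with hr
  refine ⟨r, ?_⟩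
  intro w hw
  set ρ : ℕ → V × A × V := FairLTS.runOf r w with hρ
  set st : ℕ → V := stOf s₀ ρ with hst
  have hst0 : st 0 = s₀ := rfl
  have hstS : ∀ k, st (k + 1) = (ρ k).2.2 := fun k => rfl
  have key : ∀ n, (∀ k < n, ρ k ∈ S.E ∧ (ρ k).2.1 = w k ∧ (ρ k).1 = st k ∧
      st k ∈ safe ∧ st (k + 1) ∈ safe) ∧ (fun m => w (m + n)) ∈ S.Lang (st n) := by
    intro n
    induction n with
    | zero =>
      refine ⟨fun k hk => absurd hk (Nat.not_lt_zero k), ?_⟩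
      rw [hst0]
      simpa using hw
    | succ n ih =>
      obtain ⟨hpre, htail⟩ := ih
      obtain ⟨ρ', hrun', hacc'⟩ := htail
      set ρ₁ : ℕ → V × A × V := fun k => if k < n then ρ k else ρ' (k - n) with hρ₁
      have hρ₁lt : ∀ k, k < n → ρ₁ k = ρ k := fun k hk => if_pos hk
      have hρ₁ge : ∀ k, n ≤ k → ρ₁ k = ρ' (k - n) := fun k hk => if_neg (Nat.not_lt.mpr hk)
      have hρ₁run : S.IsRun s₀ w ρ₁ := by
        constructor
        · by_cases h0 : 0 < n
          · rw [hρ₁lt 0 h0, (hpre 0 h0).2.2.1, hst0]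
          · have hn : n = 0 := Nat.eq_zero_of_not_pos h0
            rw [hρ₁ge 0 (by omega)]
            have := hrun'.1
            simpa [hn, hst0] using this
        · intro k
          by_cases hkn : k < n
          · obtain ⟨he, hl, hc⟩ := hpre k hkn
            refine ⟨hρ₁lt k hkn ▸ he, hρ₁lt k hkn ▸ hl, ?_⟩
            rw [hρ₁lt k hkn]
            by_cases hk1 : k + 1 < n
            · rw [hρ₁lt (k+1) hk1, (hpre (k+1) hk1).2.2.1, hstS k]
            · have hkeq : k + 1 = n := by omega
              rw [hρ₁ge (k+1) (by omega)]
              have h0 : k + 1 - n = 0 := by omega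
              rw [h0]
              have := hrun'.1
              rw [this, ← hkeq, hstS k]
          · have hnk : n ≤ k := Nat.le_of_not_lt hkn
            obtain ⟨he, hl, hc⟩ := hrun'.2 (k - n)
            have hkn' : k - n + n = k := by omega
            refine ⟨hρ₁ge k hnk ▸ he, ?_, ?_⟩
            · rw [hρ₁ge k hnk, hl]
              show w (k - n + n) = w k
              rw [hkn']
            · rw [hρ₁ge k hnk, hρ₁ge (k+1) (by omega)]
              have : k + 1 - n = k - n + 1 := by omega
              rw [this]
              exact hc
      have hρ₁acc : ρ₁ ∈ S.Acc := by
        rw [hAcc]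
        intro k
        by_cases hkn : k < n
        · obtain ⟨_, _, hc, hs1, hs2⟩ := hpre k hkn
          rw [hρ₁lt k hkn]
          exact ⟨hc ▸ hs1, (hstS k) ▸ hs2⟩
        · have hnk : n ≤ k := Nat.le_of_not_lt hkn
          rw [hρ₁ge k hnk]
          rw [hAcc] at hacc'
          exact hacc' (k - n)
      have hwin := (hσ w ρ₁).resolve_left (not_not_intro ⟨hρ₁run, hρ₁acc⟩)
      set g : ℕ → V × A × V := FairLTS.g1Run σ w ρ₁ with hg
      have histeq : ∀ k, k ≤ n →
          FairLTS.g1Hist σ w ρ₁ k = (FairLTS.histOf r w k).map f := by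
        intro k
        induction k with
        | zero => intro _; rfl
        | succ k ihk =>
          intro hk
          have hk' : k < n := by omega
          rw [FairLTS.g1Hist, FairLTS.histOf, List.map_append, ihk (by omega)]
          congr 1
          have hσk : σ ((FairLTS.histOf r w k).map f) (w k) = ρ k := rfl
          rw [hσk, hρ₁lt k hk']
          show [(w k, ρ k, ρ k)] = [f (ρ k)]
          rw [hf]
          simp [(hpre k hk').2.1]
      have geq : ∀ k, k ≤ n → g k = ρ k := by
        intro k hk
        show σ (FairLTS.g1Hist σ w ρ₁ k) (w k) = ρ k
        rw [histeq k hk]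
        rfl
      obtain ⟨hgstart, hgstep⟩ := hwin.1
      have hgacc : ∀ k, (g k).1 ∈ safe ∧ (g k).2.2 ∈ safe := by
        have := hwin.2
        rw [hAcc] at this
        exact this
      have hρn : g n = ρ n := geq n le_rfl
      have hρn1 : (ρ n).1 = st n := by
        cases n with
        | zero => rw [← hρn]; exact hgstart
        | succ m =>
          rw [← hρn, (hgstep m).2.2, geq m (Nat.le_succ m), hstS m]
      refine ⟨?_, ?_⟩
      · intro k hk
        rcases Nat.lt_succ_iff_lt_or_eq.mp hk with hk | hk
        · exact hpre k hk
        · subst hk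
          refine ⟨hρn ▸ (hgstep k).1, hρn ▸ (hgstep k).2.1, hρn1, ?_, ?_⟩
          · have := (hgacc k).1
            rw [hρn, hρn1] at this
            exact this
          · have := (hgacc k).2
            rw [hρn] at this
            rw [hstS k]
            exact this
      · refine ⟨fun m => g (m + (n + 1)), ⟨?_, ?_⟩, ?_⟩
        · show (g (0 + (n + 1))).1 = st (n + 1)
          rw [Nat.zero_add, (hgstep n).2.2, hρn, hstS n]
        · intro m
          obtain ⟨he, hl, hc⟩ := hgstep (m + (n + 1))
          refine ⟨he, hl, ?_⟩
          show (g (m + 1 + (n + 1))).1 = (g (m + (n + 1))).2.2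
          rw [Nat.add_right_comm m 1 (n + 1)]
          exact hc
        · rw [hAcc]
          intro m
          exact hgacc (m + (n + 1))
  have hrun : S.IsRun s₀ w ρ := by
    constructor
    · have := ((key 1).1 0 Nat.zero_lt_one).2.2.1
      rw [this, hst0]
    · intro k
      have h1 := (key (k + 2)).1 k (by omega)
      have h2 := (key (k + 2)).1 (k + 1) (by omega)
      refine ⟨h1.1, h1.2.1, ?_⟩
      rw [h2.2.2.1, hstS k]
  have hacc : ρ ∈ S.Acc := by
    rw [hAcc]
    intro k
    have h1 := (key (k + 1)).1 k (Nat.lt_succ_self k)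
    refine ⟨?_, ?_⟩
    · rw [h1.2.2.1]; exact h1.2.2.2.1
    · rw [← hstS k]; exact h1.2.2.2.2
  exact ⟨hrun, hacc⟩

end AuxStmt14

/-- for a fair LTS with a safety acceptance condition (all states along the
run stay in the safe set `safe`), Player 2 wins the one-token game `G₁(S)` iff `S` is
history-deterministic. -/
theorem stmt14 {V A : Type} (S : FairLTS V A) (s₀ : V) (safe : Set V)
    (hAcc : S.Acc = {ρ | ∀ n, (ρ n).1 ∈ safe ∧ (ρ n).2.2 ∈ safe}) :
    S.P2WinsG1 s₀ ↔ S.HistoryDeterministic s₀ := by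
  constructor
  · rintro ⟨σ, hσ⟩
    exact g1_to_hd S s₀ safe hAcc σ hσ
  · exact hd_to_g1 S s₀
end

section
/- In the proof that history-deterministic safety/reachability timed automata are good for language inclusion: if S is a complete fair LTS with initial state q' whose language contains L(q) for a fair LTS initial state q, and q' has a resolver, then combining Player 1's letters with the resolver yields a winning strategy for Player 2 in the fair simulation game; i.e., history-determinism of q' together with L(q) ⊆ L(q') implies q ⊑_fair q'. -/
/-!
Player 2 feeds the labels of Player 1's moves to the resolver of `q'`. A resolver is only
guaranteed to build runs on words of `L(q')`, so it is first made total: whenever it proposes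
an illegal move, completeness supplies a legal one instead. This does not change the run it
builds on any word on which it already builds a run. If Player 1's run is accepting, its word
lies in `L(q) ⊆ L(q')`, so the resolver's run on it is accepting.
-/

namespace FairLTS

variable {V V' A : Type}

def lastState (s₀ : V) (h : List (V × A × V)) : V :=
  h.getLast?.elim s₀ (·.2.2)

@[simp] lemma lastState_concat (s₀ : V) (h : List (V × A × V)) (e : V × A × V) :
    lastState s₀ (h ++ [e]) = e.2.2 := by
  simp [lastState]

def IsMove (S : FairLTS V A) (s₀ : V) (h : List (V × A × V)) (a : A) (e : V × A × V) : Prop :=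
  e ∈ S.E ∧ e.1 = lastState s₀ h ∧ e.2.1 = a

section Resolver

variable {S : FairLTS V A} {s₀ : V} {r r' : List (V × A × V) → A → V × A × V} {w : ℕ → A}

lemma lastState_histOf_succ (n : ℕ) :
    lastState s₀ (histOf r w (n + 1)) = (runOf r w n).2.2 :=
  lastState_concat s₀ _ _

lemma isRun_runOf_iff :
    S.IsRun s₀ w (runOf r w) ↔ ∀ n, S.IsMove s₀ (histOf r w n) (w n) (runOf r w n) := by
  constructor
  · rintro ⟨h_init, h_step⟩ (_ | n)
    · exact ⟨(h_step 0).1, h_init, (h_step 0).2.1⟩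
    · exact ⟨(h_step _).1, by rw [lastState_histOf_succ]; exact (h_step n).2.2, (h_step _).2.1⟩
  · intro h_move
    refine ⟨(h_move 0).2.1, fun n => ⟨(h_move n).1, (h_move n).2.2, ?_⟩⟩
    rw [(h_move (n + 1)).2.1, lastState_histOf_succ]

lemma histOf_eq_of_agree (h : ∀ n, r' (histOf r w n) (w n) = r (histOf r w n) (w n)) :
    histOf r' w = histOf r w := by
  funext n
  induction n with
  | zero => rfl
  | succ n ih => simp only [histOf, ih, h]

lemma runOf_eq_of_agree (h : ∀ n, r' (histOf r w n) (w n) = r (histOf r w n) (w n)) :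
    runOf r' w = runOf r w := by
  funext n
  simp only [runOf, histOf_eq_of_agree h, h]

open scoped Classical in
noncomputable def totalize (hS : S.Complete) (s₀ : V) (r : List (V × A × V) → A → V × A × V) :
    List (V × A × V) → A → V × A × V := fun h a =>
  if S.IsMove s₀ h a (r h a) then r h a else (lastState s₀ h, a, (hS (lastState s₀ h) a).choose)

lemma isMove_totalize (hS : S.Complete) (h : List (V × A × V)) (a : A) :
    S.IsMove s₀ h a (totalize hS s₀ r h a) := by
  unfold totalize
  split_ifs with h_move
  · exact h_move
  · exact ⟨(hS _ a).choose_spec, rfl, rfl⟩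

lemma totalize_of_isMove (hS : S.Complete) {h : List (V × A × V)} {a : A}
    (h_move : S.IsMove s₀ h a (r h a)) : totalize hS s₀ r h a = r h a :=
  if_pos h_move

lemma isRun_runOf_totalize (hS : S.Complete) : S.IsRun s₀ w (runOf (totalize hS s₀ r) w) :=
  isRun_runOf_iff.2 fun _ => isMove_totalize hS _ _

lemma runOf_totalize_of_isRun (hS : S.Complete) (hr : S.IsRun s₀ w (runOf r w)) :
    runOf (totalize hS s₀ r) w = runOf r w :=
  runOf_eq_of_agree fun n => totalize_of_isMove hS (isRun_runOf_iff.1 hr n)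

lemma HistoryDeterministic.exists_total_resolver (hS : S.Complete)
    (hHD : S.HistoryDeterministic s₀) :
    ∃ r, S.IsResolver s₀ r ∧ ∀ w, S.IsRun s₀ w (runOf r w) := by
  obtain ⟨r, hr⟩ := hHD
  refine ⟨totalize hS s₀ r, fun w hw => ?_, fun _ => isRun_runOf_totalize hS⟩
  rw [runOf_totalize_of_isRun hS (hr w hw).1]
  exact hr w hw

end Resolver

def followResolver (r : List (V' × A × V') → A → V' × A × V') :
    List ((V × A × V) × (V' × A × V')) → (V × A × V) → V' × A × V' :=
  fun h e => r (h.map Prod.snd) e.2.1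

lemma map_snd_simHist_followResolver (r : List (V' × A × V') → A → V' × A × V')
    (ρ₁ : ℕ → V × A × V) (n : ℕ) :
    (simHist (followResolver r) ρ₁ n).map Prod.snd = histOf r (fun n => (ρ₁ n).2.1) n := by
  induction n with
  | zero => rfl
  | succ n ih => simp [simHist, histOf, ih, followResolver]

lemma simRun_followResolver (r : List (V' × A × V') → A → V' × A × V') (ρ₁ : ℕ → V × A × V) :
    simRun (followResolver r) ρ₁ = runOf r (fun n => (ρ₁ n).2.1) := by
  funext n
  simp only [simRun, followResolver, map_snd_simHist_followResolver, runOf]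

end FairLTS

/-- if `S'` is a complete fair LTS, history-deterministic from `q'`, and
`L(q) ⊆ L(q')` for a state `q` of a fair LTS `S`, then following the resolver yields a
winning strategy for Player 2 in the fair simulation game: `q ⊑_fair q'`. -/
theorem stmt18 {V V' A : Type} (S : FairLTS V A) (q : V)
    (S' : FairLTS V' A) (q' : V') (hS' : S'.Complete)
    (hHD : S'.HistoryDeterministic q') (hsub : S.Lang q ⊆ S'.Lang q') :
    S.FairSim S' q q' := by
  obtain ⟨r, h_resolver, h_total⟩ := hHD.exists_total_resolver hS'
  refine ⟨FairLTS.followResolver r, fun w ρ₁ hρ₁ => ?_⟩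
  have h_labels : (fun n => (ρ₁ n).2.1) = w := funext fun n => (hρ₁.2 n).2.1
  rw [FairLTS.simRun_followResolver, h_labels]
  exact ⟨h_total w, fun h_acc => (h_resolver w (hsub ⟨ρ₁, hρ₁, h_acc⟩)).2⟩
end
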